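/- arXiv:1909.11290 — 2 statements merged into one kernel-verified Lean document; each statement's English description precedes it below -/
import Mathlib

section
/- Let S be a random matrix that with probability at least 1−δ satisfies |‖Sy‖² − ‖y‖²| ≤ ε‖y‖² for all y in the column span of the augmented matrix [A, b], where ε, δ ∈ (0, 1/2). Then with probability at least 1−δ, the sketched least-squares solution x_s* = argmin_x ‖S(Ax−b)‖ satisfies ‖A x_s* − b‖² ≤ (1+4ε) ‖A x* − b‖², where x* = argmin_x ‖Ax−b‖. -/
open MeasureTheory
open scoped BigOperators ENNReal

/-- Squared Euclidean norm of a finitely-indexed real vector. -/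
noncomputable def esq {ι : Type*} [Fintype ι] (x : ι → ℝ) : ℝ := ∑ i, x i ^ 2

lemma esq_nonneg {ι : Type*} [Fintype ι] (x : ι → ℝ) : 0 ≤ esq x :=
  Finset.sum_nonneg fun _ _ => sq_nonneg _

lemma mem_span_aux {n p : ℕ} (A : Matrix (Fin n) (Fin p) ℝ) (b : Fin n → ℝ)
    (x : Fin p → ℝ) :
    A.mulVec x - b ∈
      Submodule.span ℝ ((Set.range fun j : Fin p => fun i : Fin n => A i j) ∪ {b}) := by
  apply sub_mem
  · have : A.mulVec x = ∑ j, x j • (fun i : Fin n => A i j) := by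
      funext i
      simp [Matrix.mulVec, dotProduct, mul_comm]
    rw [this]
    exact Submodule.sum_mem _ fun j _ => Submodule.smul_mem _ _
      (Submodule.subset_span (Or.inl ⟨j, rfl⟩))
  · exact Submodule.subset_span (Or.inr rfl)

theorem stmt0 {Ω : Type*} [MeasurableSpace Ω] (μ : Measure Ω) [IsProbabilityMeasure μ]
    {n p r : ℕ} (A : Matrix (Fin n) (Fin p) ℝ) (b : Fin n → ℝ)
    (S : Ω → Matrix (Fin r) (Fin n) ℝ)
    (ε δ : ℝ) (hε : ε ∈ Set.Ioo (0 : ℝ) (1/2)) (hδ : δ ∈ Set.Ioo (0 : ℝ) (1/2))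
    (xstar : Fin p → ℝ)
    (hxstar : ∀ x : Fin p → ℝ, esq (A.mulVec xstar - b) ≤ esq (A.mulVec x - b))
    (xs : Ω → Fin p → ℝ)
    (hxs : ∀ ω : Ω, ∀ x : Fin p → ℝ,
      esq ((S ω).mulVec (A.mulVec (xs ω) - b)) ≤ esq ((S ω).mulVec (A.mulVec x - b)))
    (hemb : (1 : ℝ≥0∞) - ENNReal.ofReal δ ≤
      μ {ω | ∀ y ∈ Submodule.span ℝ ((Set.range fun j : Fin p => fun i : Fin n => A i j) ∪ {b}),
        |esq ((S ω).mulVec y) - esq y| ≤ ε * esq y}) :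
    (1 : ℝ≥0∞) - ENNReal.ofReal δ ≤
      μ {ω | esq (A.mulVec (xs ω) - b) ≤ (1 + 4 * ε) * esq (A.mulVec xstar - b)} := by
  refine le_trans hemb (measure_mono ?_)
  intro ω hω
  simp only [Set.mem_setOf_eq] at hω ⊢
  obtain ⟨hε0, hε2⟩ := hε
  set E := esq (A.mulVec (xs ω) - b) with hE
  set F := esq (A.mulVec xstar - b) with hF
  have hEnn : 0 ≤ E := esq_nonneg _
  have hFnn : 0 ≤ F := esq_nonneg _
  have h1 := hω _ (mem_span_aux A b (xs ω))
  have h2 := hω _ (mem_span_aux A b xstar)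
  have h3 := hxs ω xstar
  rw [abs_le] at h1 h2
  nlinarith [mul_nonneg (mul_nonneg hε0.le (by linarith : (0:ℝ) ≤ 1 - 2*ε)) hFnn]
end

section
/- Let Σ = diag(σ₁,…,σ_p) with σᵢ ≥ 0 and Σᵢ σᵢ² = 1, and let ξ, η be independent standard Gaussian vectors in ℝ^p. Then ζ = ξᵀΣη satisfies the tail bound: Pr(|ζ| > t) ≤ 2 exp(−(t−√p)²/(4√p)) for √p ≤ t ≤ 2√p, and Pr(|ζ| > t) ≤ 2 exp(−(2t−3√p)/4) for t ≥ 2√p. -/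
open MeasureTheory ProbabilityTheory
open scoped BigOperators ENNReal

/-!
Since `2ab ≤ a² + b²`, `s |∑ σᵢ ξᵢ ηᵢ| ≤ (s/2) ∑ |σᵢ| (ξᵢ² + ηᵢ²)`, a diagonal quadratic form in
the `2p` independent standard Gaussians `(ξ, η)`. Its exponential moment therefore factors as
`∏ᵢ (1 - s|σᵢ|)⁻¹ ≤ exp (s ∑ |σᵢ| + s²) ≤ exp ((s² + s) √p)` for `0 ≤ s ≤ 1/2`, using
`(1 - x)⁻¹ ≤ exp (x + x²)` and Cauchy–Schwarz. Markov's inequality for `exp (s |ζ|)` gives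
`Pr(|ζ| > t) ≤ exp (-s t + (s² + s) √p)`; take the minimiser `s = (t - √p) / (2√p)` when
`t ≤ 2√p` and `s = 1/2` beyond.
-/

open Real in
theorem lintegral_exp_mul_sq_gaussianReal {c : ℝ} (hc : c < 1 / 2) :
    ∫⁻ x, ENNReal.ofReal (exp (c * x ^ 2)) ∂gaussianReal 0 1 =
      ENNReal.ofReal (√(1 - 2 * c))⁻¹ := by
  have hb : 0 < 1 / 2 - c := by linarith
  have hdensity : ∀ x : ℝ, gaussianPDFReal 0 1 x * exp (c * x ^ 2)
      = (√(2 * π))⁻¹ * exp (-(1 / 2 - c) * x ^ 2) := by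
    intro x
    rw [gaussianPDFReal, mul_assoc, ← exp_add]
    congr 2
    · rw [NNReal.coe_one, mul_one]
    · push_cast; ring
  have hint : Integrable fun x : ℝ => (√(2 * π))⁻¹ * exp (-(1 / 2 - c) * x ^ 2) :=
    (integrable_exp_neg_mul_sq hb).const_mul _
  rw [gaussianReal_of_var_ne_zero 0 one_ne_zero,
    lintegral_withDensity_eq_lintegral_mul _ (measurable_gaussianPDF 0 1) (by fun_prop)]
  simp only [Pi.mul_apply, gaussianPDF,
    ← ENNReal.ofReal_mul (gaussianPDFReal_nonneg 0 1 _), hdensity]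
  rw [← ofReal_integral_eq_lintegral_ofReal hint (.of_forall fun x => by positivity),
    integral_const_mul, integral_gaussian]
  congr 1
  rw [show 1 - 2 * c = 2 * (1 / 2 - c) by ring, sqrt_div pi_nonneg, sqrt_mul zero_le_two,
    sqrt_mul zero_le_two]
  have := sqrt_pos.2 pi_pos
  have := sqrt_pos.2 hb
  field_simp

theorem lintegral_exp_sum_mul_sq_of_iIndepFun {Ω ι : Type*} [MeasurableSpace Ω] {μ : Measure Ω}
    [Fintype ι] {X : ι → Ω → ℝ} (hXm : ∀ k, Measurable (X k))
    (hX : ∀ k, μ.map (X k) = gaussianReal 0 1) (hind : iIndepFun X μ)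
    {c : ι → ℝ} (hc : ∀ k, c k < 1 / 2) :
    ∫⁻ ω, ENNReal.ofReal (Real.exp (∑ k, c k * X k ω ^ 2)) ∂μ
      = ∏ k, ENNReal.ofReal (√(1 - 2 * c k))⁻¹ := by
  let g : ι → ℝ → ℝ≥0∞ := fun k x => ENNReal.ofReal (Real.exp (c k * x ^ 2))
  have hgm : ∀ k, Measurable (g k) := fun k => by fun_prop
  simp only [Real.exp_sum, ENNReal.ofReal_prod_of_nonneg fun k _ => (Real.exp_pos _).le]
  rw [lintegral_prod_eq_prod_lintegral_of_indepFun _ (fun k ω => g k (X k ω))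
    (hind.comp g hgm) fun k => (hgm k).comp (hXm k)]
  refine Finset.prod_congr rfl fun k _ => ?_
  rw [← lintegral_map (hgm k) (hXm k), hX k, lintegral_exp_mul_sq_gaussianReal (hc k)]

theorem inv_one_sub_le_exp_add_sq {x : ℝ} (h0 : 0 ≤ x) (h1 : x ≤ 1 / 2) :
    (1 - x)⁻¹ ≤ Real.exp (x + x ^ 2) := by
  have hexp := Real.sum_le_exp_of_nonneg (by positivity : 0 ≤ x + x ^ 2) 4
  simp only [Finset.sum_range_succ, Finset.sum_range_zero, Nat.factorial] at hexp
  norm_num at hexp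
  rw [inv_le_iff_one_le_mul₀ (by linarith)]
  nlinarith [pow_nonneg h0 3, pow_nonneg h0 4, mul_nonneg h0 (sub_nonneg.2 h1)]

theorem abs_sum_mul_mul_le {ι : Type*} (s : Finset ι) (w a b : ι → ℝ) :
    |∑ i ∈ s, w i * a i * b i| ≤ ∑ i ∈ s, |w i| * (a i ^ 2 + b i ^ 2) / 2 := by
  refine (Finset.abs_sum_le_sum_abs _ _).trans (Finset.sum_le_sum fun i _ => ?_)
  rw [abs_mul, abs_mul, mul_assoc, mul_div_assoc]
  have hamgm : |a i| * |b i| ≤ (a i ^ 2 + b i ^ 2) / 2 := by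
    nlinarith [sq_nonneg (abs (a i) - abs (b i)), sq_abs (a i), sq_abs (b i)]
  exact mul_le_mul_of_nonneg_left hamgm (abs_nonneg _)

theorem sum_abs_le_sqrt_card_mul_sum_sq {ι : Type*} (s : Finset ι) (w : ι → ℝ) :
    ∑ i ∈ s, |w i| ≤ √(s.card * ∑ i ∈ s, w i ^ 2) := by
  refine Real.le_sqrt_of_sq_le ?_
  simpa only [sq_abs] using sq_sum_le_card_mul_sum_sq (s := s) (f := fun i => |w i|)

theorem measure_lt_le_exp_neg_mul_mul_lintegral {Ω : Type*} [MeasurableSpace Ω] {μ : Measure Ω}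
    {X : Ω → ℝ} (hX : AEMeasurable X μ) {s : ℝ} (hs : 0 ≤ s) (t : ℝ) :
    μ {ω | t < X ω}
      ≤ ENNReal.ofReal (Real.exp (-(s * t))) * ∫⁻ ω, ENNReal.ofReal (Real.exp (s * X ω)) ∂μ := by
  have hsub : {ω | t < X ω} ⊆ {ω | ENNReal.ofReal (Real.exp (s * t))
      ≤ ENNReal.ofReal (Real.exp (s * X ω))} := fun ω hω =>
    ENNReal.ofReal_le_ofReal (Real.exp_le_exp.2 (mul_le_mul_of_nonneg_left hω.le hs))
  refine (measure_mono hsub).trans ((meas_ge_le_lintegral_div (by fun_prop)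
    (by simp [Real.exp_pos]) ENNReal.ofReal_ne_top).trans_eq ?_)
  rw [div_eq_mul_inv, mul_comm, Real.exp_neg, ENNReal.ofReal_inv_of_pos (Real.exp_pos _)]

theorem abs_le_one_of_sum_sq_eq_one {ι : Type*} [Fintype ι] {w : ι → ℝ}
    (hw : ∑ i, w i ^ 2 = 1) (i : ι) : |w i| ≤ 1 :=
  sq_le_one_iff_abs_le_one _ |>.1 <|
    hw ▸ Finset.single_le_sum (fun j _ => sq_nonneg (w j)) (Finset.mem_univ i)

theorem prod_inv_one_sub_mul_abs_le_exp {p : ℕ} {w : Fin p → ℝ} (hw : ∑ i, w i ^ 2 = 1)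
    {s : ℝ} (hs0 : 0 ≤ s) (hs2 : s ≤ 1 / 2) :
    ∏ i, (1 - s * |w i|)⁻¹ ≤ Real.exp ((s ^ 2 + s) * √p) := by
  have hw1 := abs_le_one_of_sum_sq_eq_one hw
  have hone : 1 ≤ ∑ i, |w i| := hw ▸ Finset.sum_le_sum fun i _ => by
    rw [← sq_abs]; nlinarith [hw1 i, abs_nonneg (w i)]
  have hsqrt : ∑ i, |w i| ≤ √p := by
    simpa [hw] using sum_abs_le_sqrt_card_mul_sum_sq Finset.univ w
  calc ∏ i, (1 - s * |w i|)⁻¹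
      ≤ ∏ i, Real.exp (s * |w i| + (s * |w i|) ^ 2) :=
        Finset.prod_le_prod (fun i _ => inv_nonneg.2 (by nlinarith [hw1 i]))
          fun i _ => inv_one_sub_le_exp_add_sq (by positivity) (by nlinarith [hw1 i])
    _ = Real.exp (s * ∑ i, |w i| + s ^ 2) := by
        rw [← Real.exp_sum]
        simp only [mul_pow, sq_abs, Finset.sum_add_distrib, ← Finset.mul_sum, hw, mul_one]
    _ ≤ Real.exp ((s ^ 2 + s) * √p) := Real.exp_le_exp.2 (by nlinarith)

section WeightedBilinearForm

variable {Ω : Type*} [MeasurableSpace Ω] {μ : Measure Ω} {p : ℕ} {σ : Fin p → ℝ}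
  {ξ η : Ω → Fin p → ℝ}

theorem lintegral_exp_mul_abs_sum_mul_mul_le (hσ2 : ∑ i, σ i ^ 2 = 1)
    (hmξ : ∀ i, Measurable fun ω => ξ ω i) (hmη : ∀ i, Measurable fun ω => η ω i)
    (hξ : ∀ i, Measure.map (fun ω => ξ ω i) μ = gaussianReal 0 1)
    (hη : ∀ i, Measure.map (fun ω => η ω i) μ = gaussianReal 0 1)
    (hindep : iIndepFun
      (Sum.elim (fun i (ω : Ω) => ξ ω i) (fun i (ω : Ω) => η ω i) : Fin p ⊕ Fin p → Ω → ℝ) μ)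
    {s : ℝ} (hs0 : 0 ≤ s) (hs2 : s ≤ 1 / 2) :
    ∫⁻ ω, ENNReal.ofReal (Real.exp (s * |∑ i, σ i * ξ ω i * η ω i|)) ∂μ
      ≤ ENNReal.ofReal (Real.exp ((s ^ 2 + s) * √p)) := by
  let X : Fin p ⊕ Fin p → Ω → ℝ := Sum.elim (fun i ω => ξ ω i) (fun i ω => η ω i)
  let c : Fin p ⊕ Fin p → ℝ := Sum.elim (fun i => s * |σ i| / 2) (fun i => s * |σ i| / 2)
  have hsσ : ∀ i, s * |σ i| < 1 := fun i => by
    nlinarith [abs_le_one_of_sum_sq_eq_one hσ2 i, abs_nonneg (σ i)]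
  have hpt : ∀ ω, s * |∑ i, σ i * ξ ω i * η ω i| ≤ ∑ k, c k * X k ω ^ 2 := fun ω => by
    simp only [Fintype.sum_sum_type, c, X, Sum.elim_inl, Sum.elim_inr, ← Finset.sum_add_distrib]
    refine (mul_le_mul_of_nonneg_left (abs_sum_mul_mul_le _ σ _ _) hs0).trans_eq ?_
    rw [Finset.mul_sum]
    exact Finset.sum_congr rfl fun i _ => by ring
  calc ∫⁻ ω, ENNReal.ofReal (Real.exp (s * |∑ i, σ i * ξ ω i * η ω i|)) ∂μ
      ≤ ∫⁻ ω, ENNReal.ofReal (Real.exp (∑ k, c k * X k ω ^ 2)) ∂μ :=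
        lintegral_mono fun ω => ENNReal.ofReal_le_ofReal (Real.exp_le_exp.2 (hpt ω))
    _ = ∏ k, ENNReal.ofReal (√(1 - 2 * c k))⁻¹ := by
        refine lintegral_exp_sum_mul_sq_of_iIndepFun (by rintro (i | i); exacts [hmξ i, hmη i])
          (by rintro (i | i); exacts [hξ i, hη i]) hindep fun k => ?_
        rcases k with i | i <;>
          · simp only [c, Sum.elim_inl, Sum.elim_inr]; linarith [hsσ i]
    _ = ENNReal.ofReal (∏ i, (1 - s * |σ i|)⁻¹) := by
        rw [Fintype.prod_sum_type, ← Finset.prod_mul_distrib,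
          ENNReal.ofReal_prod_of_nonneg fun i _ => inv_nonneg.2 (by linarith [hsσ i])]
        refine Finset.prod_congr rfl fun i _ => ?_
        have hci : 1 - 2 * (s * |σ i| / 2) = 1 - s * |σ i| := by ring
        simp only [c, Sum.elim_inl, Sum.elim_inr, hci]
        rw [← ENNReal.ofReal_mul (by positivity), ← mul_inv,
          Real.mul_self_sqrt (by linarith [hsσ i])]
    _ ≤ ENNReal.ofReal (Real.exp ((s ^ 2 + s) * √p)) :=
        ENNReal.ofReal_le_ofReal (prod_inv_one_sub_mul_abs_le_exp hσ2 hs0 hs2)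

theorem measure_lt_abs_sum_mul_mul_le (hσ2 : ∑ i, σ i ^ 2 = 1)
    (hmξ : ∀ i, Measurable fun ω => ξ ω i) (hmη : ∀ i, Measurable fun ω => η ω i)
    (hξ : ∀ i, Measure.map (fun ω => ξ ω i) μ = gaussianReal 0 1)
    (hη : ∀ i, Measure.map (fun ω => η ω i) μ = gaussianReal 0 1)
    (hindep : iIndepFun
      (Sum.elim (fun i (ω : Ω) => ξ ω i) (fun i (ω : Ω) => η ω i) : Fin p ⊕ Fin p → Ω → ℝ) μ)
    {s : ℝ} (hs0 : 0 ≤ s) (hs2 : s ≤ 1 / 2) (t : ℝ) :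
    μ {ω | t < |∑ i, σ i * ξ ω i * η ω i|}
      ≤ ENNReal.ofReal (Real.exp (-(s * t) + (s ^ 2 + s) * √p)) := by
  have hZ : Measurable fun ω => |∑ i, σ i * ξ ω i * η ω i| := by fun_prop
  calc μ {ω | t < |∑ i, σ i * ξ ω i * η ω i|}
      ≤ ENNReal.ofReal (Real.exp (-(s * t)))
          * ∫⁻ ω, ENNReal.ofReal (Real.exp (s * |∑ i, σ i * ξ ω i * η ω i|)) ∂μ :=
        measure_lt_le_exp_neg_mul_mul_lintegral hZ.aemeasurable hs0 t
    _ ≤ ENNReal.ofReal (Real.exp (-(s * t))) * ENNReal.ofReal (Real.exp ((s ^ 2 + s) * √p)) := by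
        gcongr
        exact lintegral_exp_mul_abs_sum_mul_mul_le hσ2 hmξ hmη hξ hη hindep hs0 hs2
    _ = ENNReal.ofReal (Real.exp (-(s * t) + (s ^ 2 + s) * √p)) := by
        rw [← ENNReal.ofReal_mul (Real.exp_nonneg _), Real.exp_add]

end WeightedBilinearForm

theorem stmt14_general {Ω : Type*} [MeasurableSpace Ω] (μ : Measure Ω)
    {p : ℕ} (σ : Fin p → ℝ) (hσ2 : ∑ i, σ i ^ 2 = 1)
    (ξ η : Ω → Fin p → ℝ)
    (hmξ : ∀ i, Measurable fun ω => ξ ω i) (hmη : ∀ i, Measurable fun ω => η ω i)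
    (hξ : ∀ i, Measure.map (fun ω => ξ ω i) μ = gaussianReal 0 1)
    (hη : ∀ i, Measure.map (fun ω => η ω i) μ = gaussianReal 0 1)
    (hindep : iIndepFun
      (Sum.elim (fun i (ω : Ω) => ξ ω i) (fun i (ω : Ω) => η ω i) : Fin p ⊕ Fin p → Ω → ℝ) μ)
    (t : ℝ) :
    (Real.sqrt p ≤ t → t ≤ 2 * Real.sqrt p →
      μ {ω | t < |∑ i, σ i * ξ ω i * η ω i|}
        ≤ ENNReal.ofReal (2 * Real.exp (-(t - Real.sqrt p) ^ 2 / (4 * Real.sqrt p)))) ∧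
    (2 * Real.sqrt p ≤ t →
      μ {ω | t < |∑ i, σ i * ξ ω i * η ω i|}
        ≤ ENNReal.ofReal (2 * Real.exp (-(2 * t - 3 * Real.sqrt p) / 4))) := by
  have hp : (0 : ℝ) < √p := Real.sqrt_pos.2 <| Nat.cast_pos.2 <|
    Nat.pos_of_ne_zero fun hp0 => by subst hp0; simp at hσ2
  have htail := fun s hs0 hs2 =>
    measure_lt_abs_sum_mul_mul_le hσ2 hmξ hmη hξ hη hindep (s := s) hs0 hs2 t
  constructor
  · intro hlo hhi
    set s := (t - √p) / (2 * √p) with hs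
    have hs0 : 0 ≤ s := div_nonneg (sub_nonneg.2 hlo) (by positivity)
    have hs2 : s ≤ 1 / 2 := by rw [hs, div_le_iff₀ (by positivity)]; linarith
    have hexp : -(s * t) + (s ^ 2 + s) * √p = -(t - √p) ^ 2 / (4 * √p) := by
      rw [hs]; field_simp; ring
    refine (htail s hs0 hs2).trans (ENNReal.ofReal_le_ofReal ?_)
    rw [hexp]
    linarith [Real.exp_pos (-(t - √p) ^ 2 / (4 * √p))]
  · intro hlo
    refine (htail (1 / 2) (by norm_num) le_rfl).trans (ENNReal.ofReal_le_ofReal ?_)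
    rw [show -(1 / 2 * t) + ((1 / 2) ^ 2 + 1 / 2) * √p = -(2 * t - 3 * √p) / 4 by ring]
    linarith [Real.exp_pos (-(2 * t - 3 * √p) / 4)]

theorem stmt14 {Ω : Type*} [MeasurableSpace Ω] (μ : Measure Ω) [IsProbabilityMeasure μ]
    {p : ℕ} (σ : Fin p → ℝ) (hσ : ∀ i, 0 ≤ σ i) (hσ2 : ∑ i, σ i ^ 2 = 1)
    (ξ η : Ω → Fin p → ℝ)
    (hmξ : ∀ i, Measurable fun ω => ξ ω i) (hmη : ∀ i, Measurable fun ω => η ω i)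
    (hξ : ∀ i, Measure.map (fun ω => ξ ω i) μ = gaussianReal 0 1)
    (hη : ∀ i, Measure.map (fun ω => η ω i) μ = gaussianReal 0 1)
    (hindep : iIndepFun
      (Sum.elim (fun i (ω : Ω) => ξ ω i) (fun i (ω : Ω) => η ω i) : Fin p ⊕ Fin p → Ω → ℝ) μ)
    (t : ℝ) :
    (Real.sqrt p ≤ t → t ≤ 2 * Real.sqrt p →
      μ {ω | t < |∑ i, σ i * ξ ω i * η ω i|}
        ≤ ENNReal.ofReal (2 * Real.exp (-(t - Real.sqrt p) ^ 2 / (4 * Real.sqrt p)))) ∧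
    (2 * Real.sqrt p ≤ t →
      μ {ω | t < |∑ i, σ i * ξ ω i * η ω i|}
        ≤ ENNReal.ofReal (2 * Real.exp (-(2 * t - 3 * Real.sqrt p) / 4))) :=
  stmt14_general μ σ hσ2 ξ η hmξ hmη hξ hη hindep t
end
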